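/- arXiv:2009.10572 — 5 statements merged into one kernel-verified Lean document; each statement's English description precedes it below -/
import Mathlib

section
/- Let ℓ be a prime and let a, b, c be positive integers with b < c and a ≡ 1 (mod ℓ). Set S_b = ∑_{j=0}^{ℓ-1} a^(ℓ^b · j) and S_c = ∑_{j=0}^{ℓ-1} a^(ℓ^c · j) (so ℓ divides both S_b and S_c). Then: (i) every prime p dividing S_b / ℓ satisfies p > ℓ^(b+1); and (ii) gcd(S_b, S_c) = ℓ. In particular S_b/ℓ and S_c/ℓ are coprime. -/
/-!
Write `S_k = ∑_{j<ℓ} x^j` with `x = a^(ℓ^k)`. Since `a ≡ 1 (mod ℓ)` lifts to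
`x ≡ 1 (mod ℓ^(k+1))`, we get `S_k ≡ ℓ (mod ℓ^2)` for `k ≥ 1`, so `ℓ ∥ S_k` and `S_k / ℓ` is prime
to `ℓ`. Any other prime `p ∣ S_k` has `x ≢ 1` but `x^ℓ ≡ 1 (mod p)`, so `a` has order exactly
`ℓ^(k+1)` modulo `p`. This forces `ℓ^(k+1) ∣ p - 1`, and a common prime factor of `S_b / ℓ` and
`S_c / ℓ` would give `a` two different orders.
-/

open Finset

theorem Nat.ModEq.pow_pow_modEq_one {ℓ a : ℕ} (h : a ≡ 1 [MOD ℓ]) (k : ℕ) :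
    a ^ ℓ ^ k ≡ 1 [MOD ℓ ^ (k + 1)] := by
  rw [Nat.modEq_iff_dvd] at h ⊢
  exact_mod_cast (one_pow (ℓ ^ k) : (1 : ℤ) ^ ℓ ^ k = 1) ▸ dvd_sub_pow_of_dvd_sub h k

theorem Nat.ModEq.geom_sum_modEq {m x : ℕ} (h : x ≡ 1 [MOD m]) (n : ℕ) :
    ∑ j ∈ range n, x ^ j ≡ n [MOD m] := by
  simpa using Nat.ModEq.sum fun j (_ : j ∈ range n) => h.pow j

theorem orderOf_eq_prime_pow_of_geom_sum_eq_zero {R : Type*} [CommRing R] {ℓ k : ℕ}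
    [Fact ℓ.Prime] {x : R} (hℓ : (ℓ : R) ≠ 0) (h : ∑ j ∈ range ℓ, (x ^ ℓ ^ k) ^ j = 0) :
    orderOf x = ℓ ^ (k + 1) := by
  refine orderOf_eq_prime_pow (fun h1 => hℓ ?_) ?_
  · simpa [h1] using h
  · rw [pow_succ, pow_mul, ← sub_eq_zero, ← geom_sum_mul, h, zero_mul]

theorem ZMod.orderOf_lt_card {p : ℕ} [Fact p.Prime] (x : ZMod p) : orderOf x < p := by
  have hp := (Fact.out : p.Prime).two_le
  rcases eq_or_ne x 0 with rfl | hx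
  · rw [orderOf_zero]
    omega
  · have := Nat.le_of_dvd (by omega) (ZMod.orderOf_dvd_card_sub_one hx)
    omega

section

variable {ℓ a k : ℕ}

theorem sum_pow_pow_mul_modEq (hmod : a ≡ 1 [MOD ℓ]) (k : ℕ) :
    ∑ j ∈ range ℓ, a ^ (ℓ ^ k * j) ≡ ℓ [MOD ℓ ^ (k + 1)] := by
  simpa only [pow_mul] using (hmod.pow_pow_modEq_one k).geom_sum_modEq ℓ

theorem dvd_sum_pow_pow_mul (hmod : a ≡ 1 [MOD ℓ]) (k : ℕ) :
    ℓ ∣ ∑ j ∈ range ℓ, a ^ (ℓ ^ k * j) :=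
  ((sum_pow_pow_mul_modEq hmod k).dvd_iff (dvd_pow_self ℓ k.succ_ne_zero)).mpr dvd_rfl

theorem not_sq_dvd_sum_pow_pow_mul (hℓ : 1 < ℓ) (hmod : a ≡ 1 [MOD ℓ]) (hk : 0 < k) :
    ¬ ℓ ^ 2 ∣ ∑ j ∈ range ℓ, a ^ (ℓ ^ k * j) := by
  rw [(sum_pow_pow_mul_modEq hmod k).dvd_iff (pow_dvd_pow ℓ (by omega))]
  exact fun h => absurd (Nat.le_of_dvd (by omega) h) (by nlinarith)

theorem not_dvd_sum_pow_pow_mul_div (hℓ : 1 < ℓ) (hmod : a ≡ 1 [MOD ℓ]) (hk : 0 < k) :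
    ¬ ℓ ∣ (∑ j ∈ range ℓ, a ^ (ℓ ^ k * j)) / ℓ := by
  refine fun h => not_sq_dvd_sum_pow_pow_mul hℓ hmod hk ?_
  rw [sq, ← Nat.mul_div_cancel' (dvd_sum_pow_pow_mul hmod k)]
  exact mul_dvd_mul_left ℓ h

theorem orderOf_eq_of_prime_dvd_sum_pow_pow_mul (hℓ : ℓ.Prime) {p : ℕ} [Fact p.Prime]
    (hpℓ : p ≠ ℓ) (hp : p ∣ ∑ j ∈ range ℓ, a ^ (ℓ ^ k * j)) :
    orderOf (a : ZMod p) = ℓ ^ (k + 1) := by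
  have := Fact.mk hℓ
  refine orderOf_eq_prime_pow_of_geom_sum_eq_zero ?_ ?_
  · rw [Ne, ZMod.natCast_eq_zero_iff]
    exact fun h => hpℓ ((Nat.prime_dvd_prime_iff_eq Fact.out hℓ).mp h)
  · simpa [pow_mul] using (ZMod.natCast_eq_zero_iff _ p).mpr hp

theorem orderOf_eq_of_prime_dvd_sum_pow_pow_mul_div (hℓ : ℓ.Prime) (hmod : a ≡ 1 [MOD ℓ])
    (hk : 0 < k) {p : ℕ} [Fact p.Prime] (hp : p ∣ (∑ j ∈ range ℓ, a ^ (ℓ ^ k * j)) / ℓ) :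
    orderOf (a : ZMod p) = ℓ ^ (k + 1) := by
  refine orderOf_eq_of_prime_dvd_sum_pow_pow_mul hℓ ?_
    (hp.trans (Nat.div_dvd_of_dvd (dvd_sum_pow_pow_mul hmod k)))
  rintro rfl
  exact not_dvd_sum_pow_pow_mul_div hℓ.one_lt hmod hk hp

end

open Finset in
theorem stmt_0_general (ℓ a b c : ℕ) (hℓ : ℓ.Prime) (hb : 0 < b)
    (hbc : b < c) (hmod : a ≡ 1 [MOD ℓ]) :
    (∀ p : ℕ, p.Prime → p ∣ (∑ j ∈ Finset.range ℓ, a ^ (ℓ ^ b * j)) / ℓ →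
      p > ℓ ^ (b + 1)) ∧
    Nat.gcd (∑ j ∈ Finset.range ℓ, a ^ (ℓ ^ b * j))
      (∑ j ∈ Finset.range ℓ, a ^ (ℓ ^ c * j)) = ℓ ∧
    Nat.Coprime ((∑ j ∈ Finset.range ℓ, a ^ (ℓ ^ b * j)) / ℓ)
      ((∑ j ∈ Finset.range ℓ, a ^ (ℓ ^ c * j)) / ℓ) := by
  have hcop : Nat.Coprime ((∑ j ∈ range ℓ, a ^ (ℓ ^ b * j)) / ℓ)
      ((∑ j ∈ range ℓ, a ^ (ℓ ^ c * j)) / ℓ) := by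
    refine Nat.coprime_of_dvd fun p hp hpb hpc => ?_
    have := Fact.mk hp
    have hord := (orderOf_eq_of_prime_dvd_sum_pow_pow_mul_div hℓ hmod hb hpb).symm.trans
      (orderOf_eq_of_prime_dvd_sum_pow_pow_mul_div hℓ hmod (hb.trans hbc) hpc)
    have := Nat.pow_right_injective hℓ.two_le hord
    omega
  refine ⟨fun p hp hpb => ?_, ?_, hcop⟩
  · have := Fact.mk hp
    exact orderOf_eq_of_prime_dvd_sum_pow_pow_mul_div hℓ hmod hb hpb ▸ ZMod.orderOf_lt_card _
  · rw [← Nat.mul_div_cancel' (dvd_sum_pow_pow_mul hmod b),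
      ← Nat.mul_div_cancel' (dvd_sum_pow_pow_mul hmod c), Nat.gcd_mul_left, hcop.gcd_eq_one,
      mul_one]

open Finset in
theorem stmt_0 (ℓ a b c : ℕ) (hℓ : ℓ.Prime) (ha : 0 < a) (hb : 0 < b) (hc : 0 < c)
    (hbc : b < c) (hmod : a ≡ 1 [MOD ℓ]) :
    (∀ p : ℕ, p.Prime → p ∣ (∑ j ∈ Finset.range ℓ, a ^ (ℓ ^ b * j)) / ℓ →
      p > ℓ ^ (b + 1)) ∧
    Nat.gcd (∑ j ∈ Finset.range ℓ, a ^ (ℓ ^ b * j))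
      (∑ j ∈ Finset.range ℓ, a ^ (ℓ ^ c * j)) = ℓ ∧
    Nat.Coprime ((∑ j ∈ Finset.range ℓ, a ^ (ℓ ^ b * j)) / ℓ)
      ((∑ j ∈ Finset.range ℓ, a ^ (ℓ ^ c * j)) / ℓ) :=
  stmt_0_general ℓ a b c hℓ hb hbc hmod
end

section
/- Let n ≥ 1 be an integer, let t ∈ Ω lie in GF(2, 2·3^(n-1)), and let u ∈ Ω be nonzero such that u³ lies in GF(2, 2·3^(n-1)) and (u³)² + t·u³ + 1 = 0. Then y := u + u⁻¹ lies in GF(2, 2·3^n), satisfies y³ + y + t = 0, and y lies in GF(2, 2·3^(n-1)) if and only if u lies in GF(2, 2·3^(n-1)). -/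
noncomputable abbrev Ω : Type := AlgebraicClosure (ZMod 2)

/-!
Put `q = 2 ^ (2 * 3 ^ (n - 1))`, so `q ≡ 1 [MOD 3]` and `2 ^ (2 * 3 ^ n) = q ^ 3`. The quadratic
says `t = u ^ 3 + u⁻³`, and in characteristic `2` the identity `(u + u⁻¹) ^ 3 = u ^ 3 + u⁻³ + (u + u⁻¹)`
gives the cubic. Since `u ^ 3` is fixed by `x ↦ x ^ q`, `u ^ (3 (q - 1)) = 1`, and `3 (q - 1)` divides
`q ^ 3 - 1`, so `u` is fixed by `x ↦ x ^ (q ^ 3)`; and `u + u⁻¹` is fixed by `x ↦ x ^ q` iff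
`u ^ q ∈ {u, u⁻¹}`.
-/

lemma two_pow_two_mul_mod_three (k : ℕ) : 2 ^ (2 * k) % 3 = 1 := by
  rw [pow_mul, Nat.pow_mod]
  norm_num

section GroupWithZero

variable {G₀ : Type*} [GroupWithZero G₀] {u : G₀} {q : ℕ}

lemma pow_pow_three_eq_self_of_pow_three_pow_eq (hu : u ≠ 0) (hq : q % 3 = 1)
    (hu3 : (u ^ 3) ^ q = u ^ 3) : u ^ q ^ 3 = u := by
  obtain ⟨s, rfl⟩ : ∃ s, q = 3 * s + 1 := ⟨q / 3, by omega⟩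
  have h9 : u ^ (9 * s) = 1 := by
    rw [← pow_mul, show 3 * (3 * s + 1) = 9 * s + 3 by ring, pow_add] at hu3
    exact (mul_eq_right₀ (pow_ne_zero 3 hu)).mp hu3
  rw [show (3 * s + 1) ^ 3 = 9 * s * (3 * s ^ 2 + 3 * s + 1) + 1 by ring, pow_succ, pow_mul, h9,
    one_pow, one_mul]

end GroupWithZero

section Field

variable {K : Type*} [Field K]

lemma add_inv_pow_char_pow (p : ℕ) [ExpChar K p] (u : K) (k : ℕ) :
    (u + u⁻¹) ^ p ^ k = u ^ p ^ k + (u ^ p ^ k)⁻¹ := by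
  rw [add_pow_expChar_pow, inv_pow]

lemma eq_or_mul_eq_one_of_add_inv_eq_add_inv {a b : K} (ha : a ≠ 0) (hb : b ≠ 0)
    (h : a + a⁻¹ = b + b⁻¹) : a = b ∨ a * b = 1 := by
  have key : (a - b) * (a * b - 1) = 0 := by
    field_simp at h
    linear_combination h
  rcases mul_eq_zero.mp key with h | h
  · exact .inl (sub_eq_zero.mp h)
  · exact .inr (sub_eq_zero.mp h)

variable [CharP K 2]

lemma add_inv_pow_three_add_add_inv {u : K} (hu : u ≠ 0) :
    (u + u⁻¹) ^ 3 + (u + u⁻¹) = u ^ 3 + (u ^ 3)⁻¹ := by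
  field_simp
  linear_combination (2 * u ^ 4 + 2 * u ^ 2) * CharTwo.two_eq_zero (R := K)

lemma eq_add_inv_of_sq_add_mul_add_one_eq_zero {w t : K} (hw : w ≠ 0)
    (h : w ^ 2 + t * w + 1 = 0) : t = w + w⁻¹ := by
  field_simp
  linear_combination h - (w ^ 2 + 1) * CharTwo.two_eq_zero (R := K)

/-- The alternative `u ^ q = u⁻¹` forces `u ^ 6 = 1`, hence `u ^ 3 = 1` in characteristic `2`. -/
lemma pow_eq_self_of_add_inv_pow_eq {u : K} {q : ℕ} (hu : u ≠ 0) (hq : q % 3 = 1)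
    (hu3 : (u ^ 3) ^ q = u ^ 3) (h : u ^ q + (u ^ q)⁻¹ = u + u⁻¹) : u ^ q = u := by
  rcases eq_or_mul_eq_one_of_add_inv_eq_add_inv (pow_ne_zero q hu) hu h with h | h
  · exact h
  have hcube : u ^ 3 = 1 := by
    refine CharTwo.sq_injective ?_
    calc (u ^ 3) ^ 2 = (u ^ 3) ^ q * u ^ 3 := by rw [hu3, sq]
      _ = (u ^ q * u) ^ 3 := by rw [mul_pow, ← pow_mul, ← pow_mul, mul_comm 3 q]
      _ = 1 ^ 2 := by rw [h, one_pow, one_pow]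
  obtain ⟨s, rfl⟩ : ∃ s, q = 3 * s + 1 := ⟨q / 3, by omega⟩
  rw [pow_succ, pow_mul, hcube, one_pow, one_mul]

end Field

theorem stmt_2_general (n : ℕ) (hn : 1 ≤ n) (t u : Ω)
    (hu : u ≠ 0)
    (hu3 : (u ^ 3) ^ (2 ^ (2 * 3 ^ (n - 1))) = u ^ 3)
    (hquad : (u ^ 3) ^ 2 + t * u ^ 3 + 1 = 0) :
    (u + u⁻¹) ^ (2 ^ (2 * 3 ^ n)) = u + u⁻¹ ∧
    (u + u⁻¹) ^ 3 + (u + u⁻¹) + t = 0 ∧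
    ((u + u⁻¹) ^ (2 ^ (2 * 3 ^ (n - 1))) = u + u⁻¹ ↔
      u ^ (2 ^ (2 * 3 ^ (n - 1))) = u) := by
  have hq := two_pow_two_mul_mod_three (3 ^ (n - 1))
  have hexp : 2 ^ (2 * 3 ^ n) = (2 ^ (2 * 3 ^ (n - 1))) ^ 3 := by
    rw [← pow_mul, mul_assoc, ← pow_succ, Nat.sub_add_cancel hn]
  refine ⟨?_, ?_, ?_⟩
  · rw [hexp, ← pow_mul, add_inv_pow_char_pow 2, pow_mul,
      pow_pow_three_eq_self_of_pow_three_pow_eq hu hq hu3]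
  · rw [add_inv_pow_three_add_add_inv hu,
      ← eq_add_inv_of_sq_add_mul_add_one_eq_zero (pow_ne_zero 3 hu) hquad, CharTwo.add_self_eq_zero]
  · rw [add_inv_pow_char_pow 2]
    refine ⟨pow_eq_self_of_add_inv_pow_eq hu hq hu3, fun h => by rw [h]⟩

theorem stmt_2 (n : ℕ) (hn : 1 ≤ n) (t u : Ω)
    (ht : t ^ (2 ^ (2 * 3 ^ (n - 1))) = t)
    (hu : u ≠ 0)
    (hu3 : (u ^ 3) ^ (2 ^ (2 * 3 ^ (n - 1))) = u ^ 3)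
    (hquad : (u ^ 3) ^ 2 + t * u ^ 3 + 1 = 0) :
    (u + u⁻¹) ^ (2 ^ (2 * 3 ^ n)) = u + u⁻¹ ∧
    (u + u⁻¹) ^ 3 + (u + u⁻¹) + t = 0 ∧
    ((u + u⁻¹) ^ (2 ^ (2 * 3 ^ (n - 1))) = u + u⁻¹ ↔
      u ^ (2 ^ (2 * 3 ^ (n - 1))) = u) :=
  stmt_2_general n hn t u hu hu3 hquad
end

section
/- For integers m ≥ 1 and 0 ≤ i < m and z ∈ Ω, define N_{m,i}(z) := z^(∏_{t=1}^{i} (q^(2^(m-t)) + 1)), with N_{m,0}(z) = z; this is the norm map from GF(q,2^m) to GF(q,2^(m-i)). Let n ≥ 2 and 1 ≤ j < n be integers and let x : ℕ → Ω be such that, for every k ≥ 1, x k is nonzero and lies in GF(q, 2^k). Then N_{n,j}(x n) / x(n-j) = ∏_{k=1}^{j} N_{n-k, j-k}( N_{n-k+1,1}(x(n-k+1)) / x(n-k) ). Moreover, if for every k with 2 ≤ k ≤ n there exists y ∈ Ω lying in GF(q, 2^(k-1)) with y²·x(k-1) = N_{k,1}(x k), then N_{n,j}(x n) / x(n-j)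 is a square in GF(q, 2^(n-j)). -/
/-!
Peeling off the bottom factor of the exponent gives `N_{m+1,i+1} = N_{m,i} ∘ N_{m+1,1}`, so the
`k`-th factor of the product is `F (k-1) / F k` with `F k = N_{n-k,j-k}(x (n-k))`, and the product
telescopes to `F 0 / F j = N_{n,j}(x n) / x (n-j)`. Under the hypothesis each factor is
`N_{n-k,j-k}(y²) = N_{n-k,j-k}(y)²`, and the norm maps `GF(q, 2^(n-k))` into `GF(q, 2^(n-j))`.
-/

/-- `z` lies in the subfield `GF(q, m)` of the algebraic closure of `ZMod q`. -/
def LiesIn (q : ℕ) [Fact q.Prime] (m : ℕ) (z : AlgebraicClosure (ZMod q)) : Prop :=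
  z ^ (q ^ m) = z

/-- `z` is a square in the subfield `GF(q, m)`. -/
def IsSqIn (q : ℕ) [Fact q.Prime] (m : ℕ) (z : AlgebraicClosure (ZMod q)) : Prop :=
  ∃ y : AlgebraicClosure (ZMod q), y ^ (q ^ m) = y ∧ y ^ 2 = z

/-- The norm map from `GF(q, 2^m)` down to `GF(q, 2^(m-i))`:
`N_{m,i}(z) = z ^ (∏_{t=1}^{i} (q^(2^(m-t)) + 1))`. -/
noncomputable def Nrm (q : ℕ) [Fact q.Prime] (m i : ℕ)
    (z : AlgebraicClosure (ZMod q)) : AlgebraicClosure (ZMod q) :=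
  z ^ (∏ t ∈ Finset.Icc 1 i, (q ^ 2 ^ (m - t) + 1))

open Finset

theorem Finset.prod_Icc_one_succ {M : Type*} [CommMonoid M] (f : ℕ → M) (i : ℕ) :
    ∏ t ∈ Icc 1 (i + 1), f t = f 1 * ∏ t ∈ Icc 1 i, f (t + 1) := by
  induction i with
  | zero => simp
  | succ i ih => rw [prod_Icc_succ_top (by omega), ih, prod_Icc_succ_top (by omega), mul_assoc]

theorem Finset.prod_Icc_div_telescope {G₀ : Type*} [CommGroupWithZero G₀] (f : ℕ → G₀) (j : ℕ)
    (hf : ∀ k ≤ j, f k ≠ 0) : ∏ k ∈ Icc 1 j, f (k - 1) / f k = f 0 / f j := by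
  induction j with
  | zero => simp [div_self (hf 0 (by omega))]
  | succ j ih =>
    rw [prod_Icc_succ_top (by omega), ih fun k hk => hf k (by omega), Nat.add_sub_cancel,
      div_mul_div_cancel₀ (hf j (by omega))]

theorem pow_succ_pow_eq_of_pow_mul_self {M : Type*} [Monoid M] {w : M} {a : ℕ}
    (h : w ^ (a * a) = w) : (w ^ (a + 1)) ^ a = w ^ (a + 1) := by
  rw [← pow_mul, add_mul, one_mul, pow_add, h, pow_succ']

section Norm

variable {q : ℕ} [Fact q.Prime]

theorem nrm_zero (m : ℕ) (z : AlgebraicClosure (ZMod q)) : Nrm q m 0 z = z := by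
  simp [Nrm]

theorem nrm_div (m i : ℕ) (a b : AlgebraicClosure (ZMod q)) :
    Nrm q m i (a / b) = Nrm q m i a / Nrm q m i b :=
  div_pow a b _

theorem nrm_pow (m i k : ℕ) (z : AlgebraicClosure (ZMod q)) :
    Nrm q m i (z ^ k) = Nrm q m i z ^ k :=
  pow_right_comm z k _

theorem nrm_succ_one (m : ℕ) (z : AlgebraicClosure (ZMod q)) :
    Nrm q (m + 1) 1 z = z ^ (q ^ 2 ^ m + 1) := by
  simp [Nrm]

theorem nrm_succ_succ (m i : ℕ) (z : AlgebraicClosure (ZMod q)) :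
    Nrm q (m + 1) (i + 1) z = Nrm q m i (Nrm q (m + 1) 1 z) := by
  simp only [Nrm, prod_Icc_one_succ, Nat.add_sub_add_right, Nat.add_sub_cancel, ← pow_mul,
    Icc_self, prod_singleton]

theorem nrm_succ_right (m i : ℕ) (z : AlgebraicClosure (ZMod q)) :
    Nrm q m (i + 1) z = Nrm q m i z ^ (q ^ 2 ^ (m - (i + 1)) + 1) := by
  rw [Nrm, prod_Icc_succ_top (by omega), pow_mul, Nrm]

theorem LiesIn.nrm {m : ℕ} {z : AlgebraicClosure (ZMod q)} (hz : LiesIn q (2 ^ m) z) {i : ℕ}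
    (hi : i ≤ m) : LiesIn q (2 ^ (m - i)) (Nrm q m i z) := by
  induction i with
  | zero => simpa [nrm_zero] using hz
  | succ i ih =>
    have hsq : q ^ 2 ^ (m - (i + 1)) * q ^ 2 ^ (m - (i + 1)) = q ^ 2 ^ (m - i) := by
      rw [← pow_add, ← two_mul, ← pow_succ', Nat.sub_add_eq, Nat.sub_add_cancel (by omega)]
    rw [LiesIn, nrm_succ_right]
    exact pow_succ_pow_eq_of_pow_mul_self (hsq ▸ ih (by omega))

theorem nrm_div_eq_prod_nrm {n j : ℕ} (hjn : j < n) (x : ℕ → AlgebraicClosure (ZMod q))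
    (hx : ∀ k, 1 ≤ k → x k ≠ 0) :
    Nrm q n j (x n) / x (n - j) =
      ∏ k ∈ Icc 1 j, Nrm q (n - k) (j - k) (Nrm q (n - k + 1) 1 (x (n - k + 1)) / x (n - k)) := by
  set F : ℕ → AlgebraicClosure (ZMod q) := fun k => Nrm q (n - k) (j - k) (x (n - k))
  have hfactor : ∀ k ∈ Icc 1 j,
      Nrm q (n - k) (j - k) (Nrm q (n - k + 1) 1 (x (n - k + 1)) / x (n - k)) = F (k - 1) / F k := by
    intro k hk
    have hk := mem_Icc.mp hk
    rw [nrm_div, ← nrm_succ_succ]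
    simp only [F, show n - (k - 1) = n - k + 1 by omega, show j - (k - 1) = j - k + 1 by omega]
  rw [prod_congr rfl hfactor, prod_Icc_div_telescope F j fun k hk => pow_ne_zero _ (hx _ (by omega))]
  simp [F, nrm_zero]

end Norm

theorem IsSqIn.mul {q : ℕ} [Fact q.Prime] {M : ℕ} {a b : AlgebraicClosure (ZMod q)}
    (ha : IsSqIn q M a) (hb : IsSqIn q M b) : IsSqIn q M (a * b) := by
  obtain ⟨y, hy, rfl⟩ := ha
  obtain ⟨z, hz, rfl⟩ := hb
  exact ⟨y * z, by rw [mul_pow, hy, hz], mul_pow y z 2⟩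

theorem isSqIn_prod {q : ℕ} [Fact q.Prime] {M : ℕ} (s : Finset ℕ)
    (g : ℕ → AlgebraicClosure (ZMod q)) (h : ∀ k ∈ s, IsSqIn q M (g k)) :
    IsSqIn q M (∏ k ∈ s, g k) :=
  prod_induction g (IsSqIn q M) (fun _ _ => IsSqIn.mul) ⟨1, one_pow _, one_pow _⟩ h

theorem stmt_4_general (q : ℕ) [Fact q.Prime]
    (n j : ℕ) (hjn : j < n)
    (x : ℕ → AlgebraicClosure (ZMod q))
    (hx : ∀ k, 1 ≤ k → x k ≠ 0 ∧ LiesIn q (2 ^ k) (x k)) :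
    Nrm q n j (x n) / x (n - j) =
      ∏ k ∈ Finset.Icc 1 j,
        Nrm q (n - k) (j - k) (Nrm q (n - k + 1) 1 (x (n - k + 1)) / x (n - k)) ∧
    ((∀ k, 2 ≤ k → k ≤ n → ∃ y : AlgebraicClosure (ZMod q),
        LiesIn q (2 ^ (k - 1)) y ∧ y ^ 2 * x (k - 1) = Nrm q k 1 (x k)) →
      IsSqIn q (2 ^ (n - j)) (Nrm q n j (x n) / x (n - j))) := by
  have hprod := nrm_div_eq_prod_nrm hjn x fun k hk => (hx k hk).1
  refine ⟨hprod, fun hcond => hprod ▸ isSqIn_prod _ _ fun k hk => ?_⟩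
  have hk := mem_Icc.mp hk
  obtain ⟨y, hy, hy2⟩ := hcond (n - k + 1) (by omega) (by omega)
  rw [Nat.add_sub_cancel] at hy hy2
  rw [← hy2, mul_div_cancel_right₀ _ (hx _ (by omega)).1, nrm_pow]
  refine ⟨Nrm q (n - k) (j - k) y, ?_, rfl⟩
  have hN := hy.nrm (i := j - k) (by omega)
  rwa [show n - k - (j - k) = n - j by omega] at hN

theorem stmt_4 (q : ℕ) [Fact q.Prime] (hodd : q ≠ 2)
    (n j : ℕ) (hn : 2 ≤ n) (hj1 : 1 ≤ j) (hjn : j < n)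
    (x : ℕ → AlgebraicClosure (ZMod q))
    (hx : ∀ k, 1 ≤ k → x k ≠ 0 ∧ LiesIn q (2 ^ k) (x k)) :
    Nrm q n j (x n) / x (n - j) =
      ∏ k ∈ Finset.Icc 1 j,
        Nrm q (n - k) (j - k) (Nrm q (n - k + 1) 1 (x (n - k + 1)) / x (n - k)) ∧
    ((∀ k, 2 ≤ k → k ≤ n → ∃ y : AlgebraicClosure (ZMod q),
        LiesIn q (2 ^ (k - 1)) y ∧ y ^ 2 * x (k - 1) = Nrm q k 1 (x k)) →
      IsSqIn q (2 ^ (n - j)) (Nrm q n j (x n) / x (n - j))) :=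
  stmt_4_general q n j hjn x hx
end

section
/- Let q be an odd prime and let c ∈ ZMod q be nonzero. Then there exists an element x₁ of F := GaloisField q 2 such that x₁ is not a square in F and x₁ + algebraMap (ZMod q) F c is not a square in F, i.e. ¬IsSquare x₁ and ¬IsSquare (x₁ + algebraMap (ZMod q) F c). -/
/-!
Every element of `𝔽_q` is a norm from `𝔽_{q²}`, i.e. of the form `b ^ (q + 1)`, hence a square
in `𝔽_{q²}`; in particular so are `c` and `-1`. It therefore suffices to find consecutive
nonsquares `z, z + 1` and take `x₁ = c z`. For those, let `χ` be the quadratic character: if no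
such `z` existed, then (as `-1` is a square) `χ z + χ (z + 1) ≥ 0` for every `z`, while these
terms sum to `0` over the field and the term at `z = 0` equals `1`.
-/

open Finset

theorem not_isSquare_mul_of_isSquare {α : Type*} [CommGroupWithZero α] {a b : α}
    (ha : IsSquare a) (ha0 : a ≠ 0) (hb : ¬IsSquare b) : ¬IsSquare (a * b) := fun hab ↦
  hb (by simpa only [mul_div_cancel_left₀ b ha0] using hab.div ha)

namespace FiniteField

theorem isSquare_algebraMap_of_natCard_eq_sq {K L : Type*} [Field K] [Field L] [Algebra K L]
    [Finite L] (hK : ringChar K ≠ 2) (hL : Nat.card L = Nat.card K ^ 2) (a : K) :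
    IsSquare (algebraMap K L a) := by
  have : Finite K := Finite.of_injective _ (algebraMap K L).injective
  have : Fintype K := Fintype.ofFinite K
  have hodd : Odd (Nat.card K) := by
    rw [Nat.card_eq_fintype_card, Nat.odd_iff]
    exact odd_card_of_char_ne_two hK
  have hexp : (Nat.card K ^ 2 - 1) / (Nat.card K - 1) = Nat.card K + 1 := by
    have hk : 1 < Nat.card K := Finite.one_lt_card
    rw [sq, mul_self_tsub_one, Nat.mul_div_cancel _ (by omega)]
  obtain ⟨b, rfl⟩ := norm_surjective K L a
  rw [algebraMap_norm_eq_pow, hL, hexp]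
  exact hodd.add_one.isSquare_pow b

theorem exists_not_isSquare_and_not_isSquare_add_one {F : Type*} [Field F] [Fintype F]
    (hF : ringChar F ≠ 2) (hneg : IsSquare (-1 : F)) :
    ∃ z : F, ¬IsSquare z ∧ ¬IsSquare (z + 1) := by
  classical
  by_contra! h
  have hnonneg : ∀ z : F, 0 ≤ quadraticChar F z + quadraticChar F (z + 1) := by
    intro z
    rcases quadraticChar_isQuadratic F z with hz | hz | hz
    · simp [quadraticChar_eq_zero_iff.mp hz]
    · rcases quadraticChar_isQuadratic F (z + 1) with h1 | h1 | h1 <;> rw [hz, h1] <;> norm_num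
    · have hz_nsq := quadraticChar_neg_one_iff_not_isSquare.mp hz
      have hz1 : z + 1 ≠ 0 := fun h0 ↦ hz_nsq (by rwa [eq_neg_of_add_eq_zero_left h0])
      rw [hz, (quadraticChar_one_iff_isSquare hz1).mpr (h z hz_nsq)]
      norm_num
  have hsum : ∑ z : F, (quadraticChar F z + quadraticChar F (z + 1)) = 0 := by
    have hshift : ∑ z : F, quadraticChar F (z + 1) = ∑ z : F, quadraticChar F z :=
      Equiv.sum_comp (Equiv.addRight 1) _
    rw [sum_add_distrib, hshift, quadraticChar_sum_zero hF, add_zero]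
  have := (sum_eq_zero_iff_of_nonneg fun z _ ↦ hnonneg z).mp hsum 0 (mem_univ 0)
  simp at this

end FiniteField

theorem stmt_9 (q : ℕ) [Fact q.Prime] (hodd : q ≠ 2)
    (c : ZMod q) (hc : c ≠ 0) :
    ∃ x₁ : GaloisField q 2, ¬ IsSquare x₁ ∧
      ¬ IsSquare (x₁ + algebraMap (ZMod q) (GaloisField q 2) c) := by
  set F := GaloisField q 2
  have : Fintype F := Fintype.ofFinite F
  have hq : ringChar (ZMod q) ≠ 2 := by rwa [ZMod.ringChar_zmod_n]
  have hF : ringChar F ≠ 2 := by rwa [ringChar.eq F q]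
  have hcard : Nat.card F = Nat.card (ZMod q) ^ 2 := by
    rw [GaloisField.card q 2 two_ne_zero, Nat.card_zmod]
  have hsq := FiniteField.isSquare_algebraMap_of_natCard_eq_sq (L := F) hq hcard
  obtain ⟨z, hz, hz1⟩ :=
    FiniteField.exists_not_isSquare_and_not_isSquare_add_one hF (by simpa using hsq (-1))
  set c' := algebraMap (ZMod q) F c
  have hc' : c' ≠ 0 := (map_ne_zero _).mpr hc
  refine ⟨c' * z, not_isSquare_mul_of_isSquare (hsq c) hc' hz, ?_⟩
  rw [← mul_add_one]
  exact not_isSquare_mul_of_isSquare (hsq c) hc' hz1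
end

section
/- Let q be an odd prime. Then there exists a sequence x : ℕ → Ω such that: x 1 lies in GF(q,2); for every n ≥ 2, (x n)² + (x n) = 2⁻¹ · x(n-1) (inverses taken in Ω, where 2 ≠ 0 since q is odd); for every n ≥ 1, x n lies in GF(q, 2^n); for every n ≥ 2, x n does not lie in GF(q, 2^(n-1)) (so the polynomial f₃(x_{n-1}, x_n) = x_n² + x_n − x_{n-1}/2 defines an infinite tower of fields); and for every n ≥ 2, orderOf (x n) > 2^((n² + 3n)/2 + ν₂(q−1) − 2), where ν₂(q−1) = padicValNat 2 (q−1). -/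
/-!
Choose `z ∈ 𝔽_{q²}` with `z` and `z - 1` both non-squares (`z = (h + 1)² / 4h` for a non-square
`h` works, since then `z - 1 = (h - 1)² / 4h`) and a chain of square roots `w₀ = z`,
`w_{k+1}² = w_k`. Each `w_k` is a non-square of `𝔽_{q^{2^{k+1}}}`, so `x_n = (w_{n-1} - 1) / 2`
satisfies the recursion, lies in `𝔽_{q^{2^n}}` and has conjugate `-1 - x_n` over
`𝔽_{q^{2^{n-1}}}`. Hence the relative norm `x_{j+1} ^ (Q + 1)`, `Q = q^{2^j}`, is `-x_j / 2`,
and the iterated norms of `x_n` are `c * x_j` with `c ∈ 𝔽_q^*`. The map `y ↦ y ^ (Q + 1)`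
divides the order of `y` by `gcd(ord y, Q + 1)`, which is even and has an odd prime factor
(otherwise `y ^ (2 (Q - 1)) = 1`, so `y ^ Q = ±y`); that prime is `≡ 1 mod 2^{j+1}`. So each
level of the tower multiplies the order by at least `2^{j+2}`, starting from
`2^{ν₂(q-1)+1} ∣ ord x_1`, which holds because `x_1` is a non-square of `𝔽_{q²}`.
-/

open Finset

theorem two_pow_succ_lt_of_prime_dvd_pow_two_pow_add_one {a n p : ℕ} (hp : p.Prime)
    (hp2 : p ≠ 2) (h : p ∣ a ^ 2 ^ n + 1) : 2 ^ (n + 1) < p := by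
  obtain ⟨k, rfl⟩ := Nat.pow_pow_add_primeFactors_one_lt hp hp2 h
  rcases k with _ | k
  · exact absurd hp (by norm_num)
  · nlinarith [Nat.two_pow_pos (n + 1)]

theorem pow_two_pow_mod_four {q j : ℕ} (hq : Odd q) (hj : j ≠ 0) : q ^ 2 ^ j % 4 = 1 := by
  obtain ⟨i, rfl⟩ := Nat.exists_eq_succ_of_ne_zero hj
  have h : q ^ 2 ^ i % 4 = 1 ∨ q ^ 2 ^ i % 4 = 3 := by
    have := Nat.odd_iff.mp (hq.pow (n := 2 ^ i)); omega
  rw [pow_succ, pow_mul, Nat.pow_mod]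
  rcases h with h | h <;> rw [h]

theorem pow_pow_eq_self_of_pow_eq_self {M : Type*} [Monoid M] {c : M} {q : ℕ} (hc : c ^ q = c)
    (m : ℕ) : c ^ q ^ m = c := by
  induction m with
  | zero => rw [pow_zero, pow_one]
  | succ m ih => rw [pow_succ, pow_mul, ih, hc]

theorem mul_pow_pow_of_pow_eq_self {M : Type*} [CommMonoid M] {c : M} {q : ℕ} (hc : c ^ q = c)
    (u : M) (m : ℕ) : (c * u) ^ q ^ m = c * u ^ q ^ m := by
  rw [mul_pow, pow_pow_eq_self_of_pow_eq_self hc]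

section GroupWithZero

variable {G₀ : Type*} [GroupWithZero G₀] {y : G₀} {N : ℕ}

theorem pow_sub_one_eq_one_of_pow_eq_self (hy0 : y ≠ 0) (hN : 1 ≤ N) (hy : y ^ N = y) :
    y ^ (N - 1) = 1 :=
  mul_left_cancel₀ hy0 (by rw [← pow_succ', Nat.sub_add_cancel hN, hy, mul_one])

theorem orderOf_pos_of_pow_eq_self (hy0 : y ≠ 0) (hN : 1 < N) (hy : y ^ N = y) :
    0 < orderOf y :=
  (isOfFinOrder_iff_pow_eq_one.mpr
    ⟨N - 1, by omega, pow_sub_one_eq_one_of_pow_eq_self hy0 hN.le hy⟩).orderOf_pos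

end GroupWithZero

/-- Euler's criterion: for `z` in the field with `Q` elements (`Q` odd), `z ^ ((Q - 1) / 2) = -1`
says that `z` is not a square there. -/
def IsNonresidue {M : Type*} [Monoid M] [HasDistribNeg M] (Q : ℕ) (z : M) : Prop :=
  z ^ ((Q - 1) / 2) = -1

namespace IsNonresidue

section Monoid

variable {M : Type*} [Monoid M] [HasDistribNeg M] {Q : ℕ} {z w : M}

theorem pow_eq_self (hz : IsNonresidue Q z) (hQ : Odd Q) : z ^ Q = z := by
  obtain ⟨t, rfl⟩ := hQ
  rw [IsNonresidue, show (2 * t + 1 - 1) / 2 = t by omega] at hz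
  rw [pow_succ, pow_mul', hz, neg_one_sq, one_mul]

theorem pow_eq_neg_of_sq_eq (hz : IsNonresidue Q z) (hQ : Odd Q) (hw : w ^ 2 = z) :
    w ^ Q = -w := by
  obtain ⟨t, rfl⟩ := hQ
  rw [IsNonresidue, show (2 * t + 1 - 1) / 2 = t by omega] at hz
  rw [pow_succ, pow_mul, hw, hz, neg_one_mul]

theorem of_sq_eq (hz : IsNonresidue Q z) (hQ : Q % 4 = 1) (hw : w ^ 2 = z) :
    IsNonresidue (Q ^ 2) w := by
  obtain ⟨t, rfl⟩ : ∃ t, Q = 4 * t + 1 := ⟨Q / 4, by omega⟩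
  rw [IsNonresidue, show (4 * t + 1 - 1) / 2 = 2 * t by omega] at hz
  have hexp : ((4 * t + 1) ^ 2 - 1) / 2 = 2 * (2 * t * (2 * t + 1)) := by
    rw [show (4 * t + 1) ^ 2 = 2 * (2 * (2 * t * (2 * t + 1))) + 1 by ring, Nat.add_sub_cancel,
      Nat.mul_div_cancel_left _ two_pos]
  rw [IsNonresidue, hexp, pow_mul, hw, pow_mul, hz, (odd_two_mul_add_one t).neg_one_pow]

theorem two_pow_dvd_orderOf (hz : IsNonresidue Q z) (hQ : Odd Q) (h1 : (-1 : M) ≠ 1) {k : ℕ}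
    (hk : 2 ^ k ∣ Q - 1) : 2 ^ k ∣ orderOf z := by
  obtain ⟨t, hQt⟩ : orderOf z ∣ Q - 1 := by
    apply orderOf_dvd_of_pow_eq_one
    obtain ⟨s, rfl⟩ := hQ
    rw [IsNonresidue, show (2 * s + 1 - 1) / 2 = s by omega] at hz
    rw [show 2 * s + 1 - 1 = 2 * s by omega, pow_mul', hz, neg_one_sq]
  have ht : Odd t := by
    refine Nat.not_even_iff_odd.mp fun ⟨s, hs⟩ => h1 ?_
    rw [← hz, orderOf_dvd_iff_pow_eq_one.mp
      ⟨s, by rw [hQt, hs, ← two_mul, mul_left_comm, Nat.mul_div_cancel_left _ two_pos]⟩]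
  exact (Nat.Coprime.pow_left k (Nat.coprime_two_left.mpr ht)).dvd_of_dvd_mul_right (hQt ▸ hk)

end Monoid

section Field

variable {F : Type*} [Field F] {Q : ℕ} {z : F}

theorem ne_zero (hz : IsNonresidue Q z) (hQ : 3 ≤ Q) : z ≠ 0 := by
  rintro rfl
  rw [IsNonresidue, zero_pow (by omega), zero_eq_neg] at hz
  exact one_ne_zero hz

theorem ne_one (hz : IsNonresidue Q z) (h1 : (-1 : F) ≠ 1) : z ≠ 1 := by
  rintro rfl
  exact h1 (by rw [← hz, one_pow])

theorem mul_of_pow_eq_self {q : ℕ} (hz : IsNonresidue (q ^ 2) z) (hq : Odd q) {c : F}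
    (hc : c ^ q = c) (hc0 : c ≠ 0) : IsNonresidue (q ^ 2) (c * z) := by
  obtain ⟨t, rfl⟩ := hq
  have hc1 : c ^ (2 * t) = 1 := by
    simpa using pow_sub_one_eq_one_of_pow_eq_self hc0 (by omega) hc
  have hexp : ((2 * t + 1) ^ 2 - 1) / 2 = 2 * t * (t + 1) := by
    rw [show (2 * t + 1) ^ 2 = 2 * (2 * t * (t + 1)) + 1 by ring, Nat.add_sub_cancel,
      Nat.mul_div_cancel_left _ two_pos]
  unfold IsNonresidue at hz ⊢
  rw [hexp] at hz ⊢
  rw [mul_pow, hz, pow_mul, hc1, one_pow, one_mul]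

end Field

end IsNonresidue

theorem isNonresidue_of_sq_chain {M : Type*} [Monoid M] [HasDistribNeg M] {q : ℕ} (hq : Odd q)
    {w : ℕ → M} (hsq : ∀ k, w (k + 1) ^ 2 = w k) (h₀ : IsNonresidue (q ^ 2) (w 0)) (k : ℕ) :
    IsNonresidue (q ^ 2 ^ (k + 1)) (w k) := by
  induction k with
  | zero => simpa using h₀
  | succ k ih =>
    have := ih.of_sq_eq (pow_two_pow_mod_four hq k.succ_ne_zero) (hsq k)
    rwa [← pow_mul, ← pow_succ] at this

theorem exists_sq_chain {F : Type*} [Field F] [IsAlgClosed F] (z : F) :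
    ∃ w : ℕ → F, w 0 = z ∧ ∀ k, w (k + 1) ^ 2 = w k := by
  choose r hr using fun a : F => IsAlgClosed.exists_pow_nat_eq a two_pos
  exact ⟨fun k => r^[k] z, rfl, fun k => by simp only [Function.iterate_succ_apply', hr]⟩

section OrderOf

variable {F : Type*} [Field F]

theorem exists_odd_prime_dvd_orderOf {y : F} {Q : ℕ} (hQ : Q % 4 = 1)
    (hy : y ^ (Q ^ 2 - 1) = 1) (h₁ : y ^ Q ≠ y) (h₂ : y ^ Q ≠ -y) :
    ∃ p, p.Prime ∧ p ≠ 2 ∧ p ∣ orderOf y ∧ p ∣ Q + 1 := by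
  by_contra! h
  obtain ⟨t, rfl⟩ : ∃ t, Q = 4 * t + 1 := ⟨Q / 4, by omega⟩
  have hcop : Nat.Coprime (orderOf y) (2 * t + 1) := Nat.coprime_of_dvd fun p hp hpy hpt =>
    h p hp (by rintro rfl; omega) hpy
      (by rw [show 4 * t + 1 + 1 = 2 * (2 * t + 1) by ring]; exact hpt.mul_left 2)
  have hord : orderOf y ∣ 2 * (4 * t) := by
    refine hcop.dvd_of_dvd_mul_right (orderOf_dvd_of_pow_eq_one ?_)
    rwa [show (4 * t + 1) ^ 2 - 1 = 2 * (4 * t) * (2 * t + 1) by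
      rw [show (4 * t + 1) ^ 2 = 2 * (4 * t) * (2 * t + 1) + 1 by ring, Nat.add_sub_cancel]] at hy
  have hsq : (y ^ (4 * t)) ^ 2 = 1 := by
    rw [← pow_mul, mul_comm]; exact orderOf_dvd_iff_pow_eq_one.mp hord
  rcases sq_eq_one_iff.mp hsq with h1 | h1
  · exact h₁ (by rw [pow_succ, h1, one_mul])
  · exact h₂ (by rw [pow_succ, h1, neg_one_mul])

theorem orderOf_pow_mul_two_pow_le {y : F} {q j : ℕ} (hq : Odd q) (hj : j ≠ 0)
    (hy : y ^ q ^ 2 ^ (j + 1) = y) (hy0 : y ≠ 0) (h₁ : y ^ q ^ 2 ^ j ≠ y)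
    (h₂ : y ^ q ^ 2 ^ j ≠ -y) (h2 : 2 ∣ orderOf y) :
    orderOf (y ^ (q ^ 2 ^ j + 1)) * 2 ^ (j + 2) ≤ orderOf y := by
  set Q := q ^ 2 ^ j
  have hQ : Q % 4 = 1 := pow_two_pow_mod_four hq hj
  have hQ1 : Q ≠ 1 := by rintro h; exact h₁ (by rw [h, pow_one])
  have hQ2 : 1 < Q ^ 2 := Nat.one_lt_pow two_ne_zero (by omega)
  rw [pow_succ, pow_mul] at hy
  have hy1 := pow_sub_one_eq_one_of_pow_eq_self hy0 hQ2.le hy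
  obtain ⟨p, hp, hp2, hpy, hpQ⟩ := exists_odd_prime_dvd_orderOf hQ hy1 h₁ h₂
  have hp_lt : 2 ^ (j + 1) < p := two_pow_succ_lt_of_prime_dvd_pow_two_pow_add_one hp hp2 hpQ
  have hg : 2 * p ∣ (orderOf y).gcd (Q + 1) :=
    Nat.Coprime.mul_dvd_of_dvd_of_dvd ((Nat.coprime_primes Nat.prime_two hp).mpr hp2.symm)
      (Nat.dvd_gcd h2 (by omega)) (Nat.dvd_gcd hpy hpQ)
  calc orderOf (y ^ (Q + 1)) * 2 ^ (j + 2)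
      ≤ orderOf (y ^ (Q + 1)) * (orderOf y).gcd (Q + 1) := by
        refine Nat.mul_le_mul_left _ (le_trans ?_ (Nat.le_of_dvd (Nat.gcd_pos_of_pos_right _
          Q.succ_pos) hg))
        rw [pow_succ']; omega
    _ = orderOf y := by
        rw [orderOf_pow' y Q.succ_ne_zero, Nat.div_mul_cancel (Nat.gcd_dvd_left _ _)]

theorem two_pow_le_orderOf_of_norm_chain {q n ν : ℕ} (hq : Odd q) (hq₁ : 1 < q) {y : ℕ → F}
    (hnorm : ∀ j, 1 ≤ j → j < n → y (j + 1) ^ (q ^ 2 ^ j + 1) = y j)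
    (hmem : ∀ j, 1 ≤ j → j ≤ n → y j ≠ 0 ∧ y j ^ q ^ 2 ^ j = y j)
    (hnew : ∀ j, 1 ≤ j → j < n →
      y (j + 1) ^ q ^ 2 ^ j ≠ y (j + 1) ∧ y (j + 1) ^ q ^ 2 ^ j ≠ -y (j + 1))
    (hbase : 2 ^ (ν + 1) ∣ orderOf (y 1)) (hn : 1 ≤ n) :
    2 ^ ((n ^ 2 + 3 * n) / 2 + ν - 1) ≤ orderOf (y n) := by
  suffices ∀ j, 1 ≤ j → j ≤ n →
      2 ∣ orderOf (y j) ∧ 2 ^ ((j ^ 2 + 3 * j) / 2 + ν - 1) ≤ orderOf (y j) from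
    (this n hn le_rfl).2
  intro j hj
  induction j, hj using Nat.le_induction with
  | base =>
    intro h1n
    have hpos := orderOf_pos_of_pow_eq_self (hmem 1 le_rfl h1n).1
      (Nat.one_lt_pow two_ne_zero hq₁) (by simpa using (hmem 1 le_rfl h1n).2)
    refine ⟨(dvd_pow_self 2 ν.succ_ne_zero).trans hbase, ?_⟩
    convert Nat.le_of_dvd hpos hbase using 2
    omega
  | succ j hj ih =>
    intro hjn
    obtain ⟨h2, hle⟩ := ih (by omega)
    have h2' : 2 ∣ orderOf (y (j + 1)) := h2.trans (hnorm j hj hjn ▸ orderOf_pow_dvd _)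
    have hstep := orderOf_pow_mul_two_pow_le hq (by omega) (hmem (j + 1) (by omega) hjn).2
      (hmem (j + 1) (by omega) hjn).1 (hnew j hj hjn).1 (hnew j hj hjn).2 h2'
    rw [hnorm j hj hjn] at hstep
    have hexp : ((j + 1) ^ 2 + 3 * (j + 1)) / 2 + ν - 1
        = ((j ^ 2 + 3 * j) / 2 + ν - 1) + (j + 2) := by
      have h4 : 4 ≤ j ^ 2 + 3 * j := by nlinarith
      have : (j + 1) ^ 2 + 3 * (j + 1) = (j ^ 2 + 3 * j) + 2 * (j + 2) := by ring
      omega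
    rw [hexp, pow_add]
    exact ⟨h2', (Nat.mul_le_mul_right _ hle).trans hstep⟩

theorem exists_pow_prod_Ico_eq_mul {q n : ℕ} {a : F} (ha : a ^ q = a) (ha0 : a ≠ 0) {x : ℕ → F}
    (hx : ∀ j, 1 ≤ j → j < n → x (j + 1) ^ (q ^ 2 ^ j + 1) = a * x j)
    {j : ℕ} (hj : 1 ≤ j) (hjn : j ≤ n) :
    ∃ c : F, c ^ q = c ∧ c ≠ 0 ∧ x n ^ ∏ l ∈ Ico j n, (q ^ 2 ^ l + 1) = c * x j := by
  induction hjn using Nat.decreasingInduction with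
  | self => exact ⟨1, one_pow _, one_ne_zero, by simp⟩
  | of_succ j hjn ih =>
    obtain ⟨c, hcq, hc0, hc⟩ := ih (by omega)
    refine ⟨c ^ 2 * a, by rw [mul_pow, pow_right_comm, hcq, ha],
      mul_ne_zero (pow_ne_zero 2 hc0) ha0, ?_⟩
    rw [prod_eq_prod_Ico_succ_bot hjn, mul_comm, pow_mul, hc, mul_pow, hx j hj hjn, pow_succ,
      pow_pow_eq_self_of_pow_eq_self hcq]
    ring

end OrderOf

section CharP

variable {F : Type*} [Field F] {q : ℕ} [Fact q.Prime] [CharP F q]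

theorem two_pow_char_pow (m : ℕ) : (2 : F) ^ q ^ m = 2 := by
  simpa [iterateFrobenius_def] using map_ofNat (iterateFrobenius F q m) 2

theorem ringChar_ne_two_of_odd (hq : Odd q) : ringChar F ≠ 2 := by
  rw [ringChar.eq F q]; rintro rfl; exact absurd hq (by decide)

theorem sub_one_div_two_pow_char_pow (u : F) (m : ℕ) :
    ((u - 1) / 2) ^ q ^ m = (u ^ q ^ m - 1) / 2 := by
  rw [div_pow, sub_pow_char_pow, one_pow, two_pow_char_pow]

theorem neg_inv_two_pow_char (hq : Odd q) : (-2⁻¹ : F) ^ q = -2⁻¹ := by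
  simpa [hq.neg_pow] using two_pow_char_pow (F := F) (q := q) 1

theorem exists_isNonresidue_and_sub_one [IsAlgClosed F] (hq : Odd q) :
    ∃ z : F, IsNonresidue (q ^ 2) z ∧ IsNonresidue (q ^ 2) (z - 1) := by
  have hF := ringChar_ne_two_of_odd (F := F) hq
  have hQ : q ^ 2 % 4 = 1 := by simpa using pow_two_pow_mod_four hq one_ne_zero
  have hQ9 : 9 ≤ q ^ 2 := by
    have : 3 ≤ q := by have := (Fact.out : q.Prime).two_le; obtain ⟨t, rfl⟩ := hq; omega
    nlinarith
  obtain ⟨h, hh⟩ := IsAlgClosed.exists_pow_nat_eq (-1 : F) (n := (q ^ 2 - 1) / 2) (by omega)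
  have hh : IsNonresidue (q ^ 2) h := hh
  have hh0 : h ≠ 0 := hh.ne_zero (by omega)
  have hneg : h ≠ -1 := by
    rintro rfl
    rw [IsNonresidue, Even.neg_one_pow (Nat.even_iff.mpr (by omega))] at hh
    exact Ring.neg_one_ne_one_of_char_ne_two hF hh.symm
  have hpos : h ≠ 1 := hh.ne_one (Ring.neg_one_ne_one_of_char_ne_two hF)
  have hfix : h ^ q ^ 2 = h := hh.pow_eq_self hq.pow
  have hunit : ∀ a : F, a ≠ 0 → a ^ q ^ 2 = a → (a ^ 2) ^ ((q ^ 2 - 1) / 2) = 1 := by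
    intro a ha0 ha
    rw [← pow_mul, show 2 * ((q ^ 2 - 1) / 2) = q ^ 2 - 1 by omega]
    exact pow_sub_one_eq_one_of_pow_eq_self ha0 (by omega) ha
  have hfrob : ∀ s : F, s ^ q = s → ((h + s) / 2) ^ q ^ 2 = (h + s) / 2 := by
    intro s hs
    rw [div_pow, add_pow_char_pow, hfix, pow_pow_eq_self_of_pow_eq_self hs, two_pow_char_pow]
  have h2 : (2 : F) ≠ 0 := Ring.two_ne_zero hF
  have ha := hunit ((h + 1) / 2) (div_ne_zero (fun e => hneg (eq_neg_of_add_eq_zero_left e)) h2)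
    (hfrob 1 (one_pow q))
  have hb := hunit ((h + -1) / 2) (div_ne_zero (fun e => hpos (by linear_combination e)) h2)
    (hfrob (-1) hq.neg_one_pow)
  unfold IsNonresidue at hh ⊢
  have hz1 : ((h + 1) / 2) ^ 2 / h - 1 = ((h + -1) / 2) ^ 2 / h := by
    field_simp
    ring
  refine ⟨((h + 1) / 2) ^ 2 / h, ?_, ?_⟩
  · rw [div_pow, ha, hh, one_div_neg_one_eq_neg_one]
  · rw [hz1, div_pow, hb, hh, one_div_neg_one_eq_neg_one]

end CharP

section Tower

variable {F : Type*} [Field F] {q : ℕ} [Fact q.Prime] [CharP F q] {w : ℕ → F}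

def tower (w : ℕ → F) : ℕ → F
  | 0 => 0
  | k + 1 => (w k - 1) / 2

@[simp] theorem tower_succ (w : ℕ → F) (k : ℕ) : tower w (k + 1) = (w k - 1) / 2 := rfl

theorem tower_succ_pow_self (hq : Odd q) {k : ℕ} (hw : IsNonresidue (q ^ 2 ^ (k + 1)) (w k)) :
    tower w (k + 1) ^ q ^ 2 ^ (k + 1) = tower w (k + 1) := by
  rw [tower_succ, sub_one_div_two_pow_char_pow, hw.pow_eq_self hq.pow]

theorem tower_succ_ne_zero (hq : Odd q) {k : ℕ} (hw : IsNonresidue (q ^ 2 ^ (k + 1)) (w k)) :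
    tower w (k + 1) ≠ 0 := by
  rw [tower_succ, div_ne_zero_iff, sub_ne_zero]
  exact ⟨hw.ne_one (Ring.neg_one_ne_one_of_char_ne_two (ringChar_ne_two_of_odd hq)),
    Ring.two_ne_zero (ringChar_ne_two_of_odd hq)⟩

theorem tower_add_two_sq_add_self (hq : Odd q) {k : ℕ} (hsq : w (k + 1) ^ 2 = w k) :
    tower w (k + 2) ^ 2 + tower w (k + 2) = 2⁻¹ * tower w (k + 1) := by
  have h2 : (2 : F) ≠ 0 := Ring.two_ne_zero (ringChar_ne_two_of_odd hq)
  rw [tower_succ, tower_succ, ← hsq]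
  field_simp
  ring

theorem tower_add_two_pow (hq : Odd q) {k : ℕ} (hw : IsNonresidue (q ^ 2 ^ (k + 1)) (w k))
    (hsq : w (k + 1) ^ 2 = w k) :
    tower w (k + 2) ^ q ^ 2 ^ (k + 1) = -1 - tower w (k + 2) := by
  have h2 : (2 : F) ≠ 0 := Ring.two_ne_zero (ringChar_ne_two_of_odd hq)
  rw [tower_succ, sub_one_div_two_pow_char_pow, hw.pow_eq_neg_of_sq_eq hq.pow hsq]
  field_simp
  ring

theorem tower_add_two_pow_ne (hq : Odd q) {k : ℕ}
    (hw : ∀ k, IsNonresidue (q ^ 2 ^ (k + 1)) (w k)) (hsq : w (k + 1) ^ 2 = w k) :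
    tower w (k + 2) ^ q ^ 2 ^ (k + 1) ≠ tower w (k + 2) := by
  have h2 : (2 : F) ≠ 0 := Ring.two_ne_zero (ringChar_ne_two_of_odd hq)
  have hq3 : 3 ≤ q := by
    have := (Fact.out : q.Prime).two_le; obtain ⟨t, rfl⟩ := hq; omega
  rw [tower_add_two_pow hq (hw k) hsq, tower_succ]
  intro h
  refine (hw (k + 1)).ne_zero (hq3.trans (Nat.le_self_pow (by positivity) q)) ?_
  field_simp at h
  exact (mul_eq_zero.mp (by linear_combination -h : (2 : F) * w (k + 1) = 0)).resolve_left h2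

theorem tower_add_two_pow_add_one (hq : Odd q) {k : ℕ}
    (hw : IsNonresidue (q ^ 2 ^ (k + 1)) (w k)) (hsq : w (k + 1) ^ 2 = w k) :
    tower w (k + 2) ^ (q ^ 2 ^ (k + 1) + 1) = -2⁻¹ * tower w (k + 1) := by
  rw [pow_succ, tower_add_two_pow hq hw hsq, neg_mul, ← tower_add_two_sq_add_self hq hsq]
  ring

theorem mul_tower_add_two_pow_ne (hq : Odd q) (hw : ∀ k, IsNonresidue (q ^ 2 ^ (k + 1)) (w k))
    {k : ℕ} (hsq : w (k + 1) ^ 2 = w k) {c : F} (hc : c ^ q = c) (hc0 : c ≠ 0) :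
    (c * tower w (k + 2)) ^ q ^ 2 ^ (k + 1) ≠ c * tower w (k + 2) ∧
      (c * tower w (k + 2)) ^ q ^ 2 ^ (k + 1) ≠ -(c * tower w (k + 2)) := by
  rw [mul_pow_pow_of_pow_eq_self hc]
  refine ⟨fun h => tower_add_two_pow_ne hq hw hsq (mul_left_cancel₀ hc0 h), fun h => ?_⟩
  rw [tower_add_two_pow hq (hw k) hsq] at h
  exact hc0 (by linear_combination -h)

theorem two_pow_dvd_orderOf_mul_tower_one (hq : Odd q) (hw₁ : IsNonresidue (q ^ 2) (w 0 - 1))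
    {c : F} (hc : c ^ q = c) (hc0 : c ≠ 0) :
    2 ^ (padicValNat 2 (q - 1) + 1) ∣ orderOf (c * tower w 1) := by
  have hF := ringChar_ne_two_of_odd (F := F) hq
  have hc' : (c * 2⁻¹) ^ q = c * 2⁻¹ := by
    rw [mul_pow, hc, inv_pow, ← pow_one q, two_pow_char_pow]
  have hcw : c * tower w 1 = c * 2⁻¹ * (w 0 - 1) := by show c * ((w 0 - 1) / 2) = _; ring
  rw [hcw]
  have hc0' : c * 2⁻¹ ≠ 0 := mul_ne_zero hc0 (inv_ne_zero (Ring.two_ne_zero hF))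
  refine (hw₁.mul_of_pow_eq_self hq hc' hc0').two_pow_dvd_orderOf hq.pow
    (Ring.neg_one_ne_one_of_char_ne_two hF) ?_
  rw [show q ^ 2 - 1 = (q - 1) * (q + 1) by simpa [mul_comm] using Nat.sq_sub_sq q 1, pow_succ]
  exact Nat.mul_dvd_mul pow_padicValNat_dvd (even_iff_two_dvd.mp hq.add_one)

theorem two_pow_lt_orderOf_tower (hq : Odd q) (hsq : ∀ k, w (k + 1) ^ 2 = w k)
    (hw : ∀ k, IsNonresidue (q ^ 2 ^ (k + 1)) (w k)) (hw₁ : IsNonresidue (q ^ 2) (w 0 - 1))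
    {n : ℕ} (hn : 2 ≤ n) :
    2 ^ ((n ^ 2 + 3 * n) / 2 + padicValNat 2 (q - 1) - 2) < orderOf (tower w n) := by
  have h2 : (2 : F) ≠ 0 := Ring.two_ne_zero (ringChar_ne_two_of_odd hq)
  set y : ℕ → F := fun j => tower w n ^ ∏ l ∈ Ico j n, (q ^ 2 ^ l + 1) with hy
  have hnorm : ∀ j, 1 ≤ j → j < n → y (j + 1) ^ (q ^ 2 ^ j + 1) = y j := by
    intro j _ hjn
    simp only [hy, ← pow_mul]
    rw [prod_eq_prod_Ico_succ_bot hjn, mul_comm]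
  have hrep : ∀ j, 1 ≤ j → j ≤ n → ∃ c : F, c ^ q = c ∧ c ≠ 0 ∧ y j = c * tower w j := by
    refine fun j hj hjn => exists_pow_prod_Ico_eq_mul (neg_inv_two_pow_char hq)
      (by simpa using h2) (fun j hj _ => ?_) hj hjn
    obtain ⟨k, rfl⟩ := Nat.exists_eq_add_of_le' hj
    exact tower_add_two_pow_add_one hq (hw k) (hsq k)
  have hmem : ∀ j, 1 ≤ j → j ≤ n → y j ≠ 0 ∧ y j ^ q ^ 2 ^ j = y j := by
    intro j hj hjn
    obtain ⟨c, hc, hc0, hcy⟩ := hrep j hj hjn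
    obtain ⟨k, rfl⟩ := Nat.exists_eq_add_of_le' hj
    rw [hcy, mul_pow_pow_of_pow_eq_self hc, tower_succ_pow_self hq (hw k)]
    exact ⟨mul_ne_zero hc0 (tower_succ_ne_zero hq (hw k)), rfl⟩
  have hnew : ∀ j, 1 ≤ j → j < n →
      y (j + 1) ^ q ^ 2 ^ j ≠ y (j + 1) ∧ y (j + 1) ^ q ^ 2 ^ j ≠ -y (j + 1) := by
    intro j hj hjn
    obtain ⟨c, hc, hc0, hcy⟩ := hrep (j + 1) (by omega) hjn
    obtain ⟨k, rfl⟩ := Nat.exists_eq_add_of_le' hj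
    rw [hcy]
    exact mul_tower_add_two_pow_ne hq hw (hsq k) hc hc0
  have hbase : 2 ^ (padicValNat 2 (q - 1) + 1) ∣ orderOf (y 1) := by
    obtain ⟨c, hc, hc0, hcy⟩ := hrep 1 le_rfl (by omega)
    rw [hcy]
    exact two_pow_dvd_orderOf_mul_tower_one hq hw₁ hc hc0
  have key := two_pow_le_orderOf_of_norm_chain hq (Fact.out : q.Prime).one_lt hnorm hmem hnew
    hbase (by omega)
  simp only [hy, Ico_self, prod_empty, pow_one] at key
  have : 4 ≤ n ^ 2 + 3 * n := by nlinarith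
  exact lt_of_lt_of_le (Nat.pow_lt_pow_right one_lt_two (by omega)) key

end Tower

theorem stmt_14 (q : ℕ) [Fact q.Prime] (hodd : q ≠ 2) :
    ∃ x : ℕ → AlgebraicClosure (ZMod q),
      (x 1) ^ (q ^ 2) = x 1 ∧
      (∀ n, 2 ≤ n → (x n) ^ 2 + x n = 2⁻¹ * x (n - 1)) ∧
      (∀ n, 1 ≤ n → (x n) ^ (q ^ 2 ^ n) = x n) ∧
      (∀ n, 2 ≤ n → ¬ (x n) ^ (q ^ 2 ^ (n - 1)) = x n) ∧
      (∀ n, 2 ≤ n →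
        orderOf (x n) > 2 ^ ((n ^ 2 + 3 * n) / 2 + padicValNat 2 (q - 1) - 2)) := by
  have hq : Odd q := (Fact.out : q.Prime).odd_of_ne_two hodd
  obtain ⟨z, hz, hz₁⟩ := exists_isNonresidue_and_sub_one (F := AlgebraicClosure (ZMod q)) hq
  obtain ⟨w, rfl, hsq⟩ := exists_sq_chain z
  have hw := isNonresidue_of_sq_chain hq hsq hz
  refine ⟨tower w, by simpa using tower_succ_pow_self hq (hw 0), fun n hn => ?_, fun n hn => ?_,
    fun n hn => ?_, fun n hn => two_pow_lt_orderOf_tower hq hsq hw hz₁ hn⟩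
  · obtain ⟨k, rfl⟩ := Nat.exists_eq_add_of_le' hn
    exact tower_add_two_sq_add_self hq (hsq k)
  · obtain ⟨k, rfl⟩ := Nat.exists_eq_add_of_le' hn
    exact tower_succ_pow_self hq (hw k)
  · obtain ⟨k, rfl⟩ := Nat.exists_eq_add_of_le' hn
    exact tower_add_two_pow_ne hq hw (hsq k)
end
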